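/- Let ∼ be the equivalence relation on ℤ² generated by the following elementary relations: for each n with f_n = R and each m, (3m, n) ∼ (3m, n+1) and (3m+1, n) ∼ (3m+2, n+1); for each n with f_n = L and each m, (3m+1, n) ∼ (3m, n+1) and (3m+2, n) ∼ (3m+2, n+1). Then for all (m,n), (m',n') ∈ ℤ², Q_{m,n} = Q_{m',n'} if and only if (m,n) ∼ (m',n'). -/

import Mathlib

/-- The relators of the presentation ⟨A, B, C | A² = B² = C² = 1⟩. -/
def rels : Set (FreeGroup (Fin 3)) :=
  {FreeGroup.of 0 * FreeGroup.of 0, FreeGroup.of 1 * FreeGroup.of 1,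
   FreeGroup.of 2 * FreeGroup.of 2}

/-- `G` is the group ⟨A, B, C | A² = B² = C² = 1⟩, the free product of three copies of ℤ/2. -/
abbrev G : Type := PresentedGroup rels

def A : G := PresentedGroup.of 0
def B : G := PresentedGroup.of 1
def C : G := PresentedGroup.of 2

/-- The distinguished element `D = C·B·A`. -/
def D : G := C * B * A

/-!
Since `Q_{m,n} = F_{n-1}(P_m)`, an equality `Q_{a,n} = Q_{b,n'}` with `n ≤ n'` says that
`f_n ∘ ⋯ ∘ f_{n'-1}` carries `P_b` to `P_a`. Follow `P_b` down one level at a time: `f_j` sends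
`P_k` either to some `P_{k'}` with `(k', j) ∼ (k, j + 1)` elementarily, or to a bad element
`D^t V S B D^{-t}` with `V` a word in `BA`, `BC` and `S ∈ {BA, BC}`, and `R`, `L` map bad elements
to bad elements. So it suffices that `P` is injective and that no `P_k` is bad.

Both follow from the representation `A, B, C ↦ [[-1,-2],[0,1]], [[-1,0],[0,1]], [[-1,0],[2,1]]`
of `G` in `GL₂(ℤ)`. It sends `BA`, `BC` to `[[1,2],[0,1]]`, `[[1,0],[2,1]]`, so the matrices of
bad elements have a fixed sign pattern. Conjugation by `D` and by `D⁻¹` preserves explicit cones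
of traceless matrices (up to sign); these contain the images of `D^t X D^{-t}` for `t ≠ 0` and
`X ∈ {A, B, C}` and have the opposite sign pattern.
-/

open Relation

local notation "M₂" => Matrix (Fin 2) (Fin 2) ℤ

lemma A_mul_self : A * A = 1 := PresentedGroup.one_of_mem (by simp [rels])
lemma B_mul_self : B * B = 1 := PresentedGroup.one_of_mem (by simp [rels])
lemma C_mul_self : C * C = 1 := PresentedGroup.one_of_mem (by simp [rels])

lemma B_inv : B⁻¹ = B := inv_eq_of_mul_eq_one_right B_mul_self

lemma D_inv : D⁻¹ = A * B * C := by
  simp only [D, mul_inv_rev, inv_eq_of_mul_eq_one_right A_mul_self, B_inv,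
    inv_eq_of_mul_eq_one_right C_mul_self, mul_assoc]

lemma map_conj_zpow_D {φ : MulAut G} (hφ : φ D = D) (t : ℤ) (x : G) :
    φ (MulAut.conj (D ^ t) x) = MulAut.conj (D ^ t) (φ x) := by
  rw [MulAut.conj_apply, MulAut.conj_apply, map_mul, map_mul, map_inv, map_zpow, hφ]

lemma eq_conj_of_conj_eq {s t : ℤ} {x y : G}
    (h : MulAut.conj (D ^ s) x = MulAut.conj (D ^ t) y) :
    x = MulAut.conj (D ^ (t - s)) y := by
  rw [sub_eq_neg_add, zpow_add, map_mul, MulAut.mul_apply, ← h, ← MulAut.mul_apply, ← map_mul,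
    zpow_neg, inv_mul_cancel, map_one, MulAut.one_apply]

def unitOfMulSelf (M : M₂) (h : M * M = 1) : M₂ˣ := ⟨M, M, h, h⟩

noncomputable def rep : G →* M₂ :=
  (Units.coeHom M₂).comp <| PresentedGroup.toGroup
    (f := ![unitOfMulSelf !![-1, -2; 0, 1] (by decide),
      unitOfMulSelf !![-1, 0; 0, 1] (by decide), unitOfMulSelf !![-1, 0; 2, 1] (by decide)])
    (by rintro r (rfl | rfl | rfl) <;> ext : 1 <;> decide)

lemma rep_A : rep A = !![-1, -2; 0, 1] := by simp [rep, A, unitOfMulSelf]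
lemma rep_B : rep B = !![-1, 0; 0, 1] := by simp [rep, B, unitOfMulSelf]
lemma rep_C : rep C = !![-1, 0; 2, 1] := by simp [rep, C, unitOfMulSelf]
lemma rep_D : rep D = !![-1, -2; 2, 5] := by
  rw [D, map_mul, map_mul, rep_A, rep_B, rep_C]; decide
lemma rep_D_inv : rep D⁻¹ = !![-5, -2; 2, 1] := by
  rw [D_inv, map_mul, map_mul, rep_A, rep_B, rep_C]; decide

lemma rep_conj (g x : G) : rep (MulAut.conj g x) = rep g * rep x * rep g⁻¹ := by
  rw [MulAut.conj_apply, map_mul, map_mul]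

def ForwardCone (M : M₂) : Prop := M 1 1 = -M 0 0 ∧ 1 ≤ M 0 0 ∧ 1 ≤ M 0 1 ∧ M 1 0 ≤ -M 0 0

def BackwardCone (M : M₂) : Prop := M 1 1 = -M 0 0 ∧ 1 ≤ M 0 0 ∧ 2 * M 0 0 ≤ M 0 1 ∧ M 1 0 ≤ -1

lemma ForwardCone.conj_D {M : M₂} (h : ForwardCone M) :
    ForwardCone (-(rep D * M * rep D⁻¹)) := by
  obtain ⟨h₁₁, h₀₀, h₀₁, h₁₀⟩ := h
  rw [rep_D, rep_D_inv, Matrix.eta_fin_two M]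
  simp only [ForwardCone, Matrix.mul_fin_two, Matrix.of_apply, Matrix.cons_val',
    Matrix.cons_val_zero, Matrix.cons_val_one, Matrix.empty_val', Matrix.cons_val_fin_one,
    Matrix.neg_apply]
  omega

lemma BackwardCone.conj_D_inv {M : M₂} (h : BackwardCone M) :
    BackwardCone (-(rep D⁻¹ * M * rep D)) := by
  obtain ⟨h₁₁, h₀₀, h₀₁, h₁₀⟩ := h
  rw [rep_D, rep_D_inv, Matrix.eta_fin_two M]
  simp only [BackwardCone, Matrix.mul_fin_two, Matrix.of_apply, Matrix.cons_val',
    Matrix.cons_val_zero, Matrix.cons_val_one, Matrix.empty_val', Matrix.cons_val_fin_one,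
    Matrix.neg_apply]
  omega

lemma or_neg_of_odd {p : M₂ → Prop} {f : M₂ → M₂} (hf : ∀ M, f (-M) = -f M)
    (h : ∀ M, p M → p (-f M)) {M : M₂} : p M ∨ p (-M) → p (f M) ∨ p (-f M)
  | .inl hM => .inr (h M hM)
  | .inr hM => .inl (by simpa [hf] using h _ hM)

lemma rep_conj_D_pow_succ {X : G} (hX : X ∈ ({A, B, C} : Set G)) (s : ℕ) :
    ForwardCone (rep (MulAut.conj (D ^ (s + 1)) X)) ∨
      ForwardCone (-rep (MulAut.conj (D ^ (s + 1)) X)) := by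
  induction s with
  | zero =>
    rcases hX with rfl | rfl | rfl <;>
      simp only [ForwardCone, zero_add, pow_one, rep_conj, rep_D, rep_D_inv, rep_A, rep_B,
        rep_C] <;>
      decide
  | succ s ih =>
    rw [pow_succ', map_mul, MulAut.mul_apply, rep_conj D]
    exact or_neg_of_odd (f := fun M => rep D * M * rep D⁻¹) (fun M => by simp)
      (fun M hM => hM.conj_D) ih

lemma rep_conj_D_inv_pow_succ {X : G} (hX : X ∈ ({A, B, C} : Set G)) (s : ℕ) :
    BackwardCone (rep (MulAut.conj (D⁻¹ ^ (s + 1)) X)) ∨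
      BackwardCone (-rep (MulAut.conj (D⁻¹ ^ (s + 1)) X)) := by
  induction s with
  | zero =>
    rcases hX with rfl | rfl | rfl <;>
      simp only [BackwardCone, zero_add, pow_one, rep_conj, inv_inv, rep_D, rep_D_inv, rep_A,
        rep_B, rep_C] <;>
      decide
  | succ s ih =>
    rw [pow_succ', map_mul, MulAut.mul_apply, rep_conj D⁻¹, inv_inv]
    exact or_neg_of_odd (f := fun M => rep D⁻¹ * M * rep D) (fun M => by simp)
      (fun M hM => hM.conj_D_inv) ih

def ConeSigns (M : M₂) : Prop := 0 < M 0 0 * M 0 1 ∧ M 0 1 * M 1 0 < 0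

lemma coneSigns_of_forwardCone {M : M₂} (h : ForwardCone M ∨ ForwardCone (-M)) :
    ConeSigns M := by
  rcases h with ⟨-, h₀₀, h₀₁, h₁₀⟩ | ⟨-, h₀₀, h₀₁, h₁₀⟩ <;>
    simp only [ConeSigns, Matrix.neg_apply] at * <;> constructor <;> nlinarith

lemma coneSigns_of_backwardCone {M : M₂} (h : BackwardCone M ∨ BackwardCone (-M)) :
    ConeSigns M := by
  rcases h with ⟨-, h₀₀, h₀₁, h₁₀⟩ | ⟨-, h₀₀, h₀₁, h₁₀⟩ <;>
    simp only [ConeSigns, Matrix.neg_apply] at * <;> constructor <;> nlinarith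

lemma coneSigns_rep_conj_D_zpow {t : ℤ} (ht : t ≠ 0) {X : G} (hX : X ∈ ({A, B, C} : Set G)) :
    ConeSigns (rep (MulAut.conj (D ^ t) X)) := by
  obtain ⟨n, rfl | rfl⟩ := Int.eq_nat_or_neg t <;>
    obtain ⟨s, rfl⟩ := Nat.exists_eq_succ_of_ne_zero (by simpa using ht)
  · rw [zpow_natCast]
    exact coneSigns_of_forwardCone (rep_conj_D_pow_succ hX s)
  · rw [zpow_neg, zpow_natCast, ← inv_pow]
    exact coneSigns_of_backwardCone (rep_conj_D_inv_pow_succ hX s)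

lemma conj_D_zpow_eq_conj {s t : ℤ} {X Y : G} (hX : X ∈ ({A, B, C} : Set G))
    (hY : Y ∈ ({A, B, C} : Set G)) (h : MulAut.conj (D ^ s) X = MulAut.conj (D ^ t) Y) :
    s = t ∧ X = Y := by
  have hXY := eq_conj_of_conj_eq h
  obtain hst | hst := eq_or_ne (t - s) 0
  · rw [hst, zpow_zero, map_one, MulAut.one_apply] at hXY
    exact ⟨by omega, hXY⟩
  · have := coneSigns_rep_conj_D_zpow hst hY
    rw [← hXY] at this
    rcases hX with rfl | rfl | rfl <;>
      exact absurd this (by simp only [ConeSigns, rep_A, rep_B, rep_C]; decide)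

def HasBadSigns (M : M₂) : Prop :=
  M 0 0 * M 0 1 ≤ 0 ∧ 0 ≤ M 0 0 * M 1 0 ∧ (M 0 1 ≠ 0 ∨ M 1 0 ≠ 0)

lemma not_hasBadSigns_rep_conj_D_zpow (t : ℤ) {X : G} (hX : X ∈ ({A, B, C} : Set G)) :
    ¬ HasBadSigns (rep (MulAut.conj (D ^ t) X)) := by
  obtain rfl | ht := eq_or_ne t 0
  · rcases hX with rfl | rfl | rfl <;>
      simp only [HasBadSigns, zpow_zero, map_one, MulAut.one_apply, rep_A, rep_B, rep_C] <;>
      decide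
  · rintro ⟨h, -⟩
    linarith [(coneSigns_rep_conj_D_zpow ht hX).1]

def posMat : Submonoid M₂ where
  carrier := {N | 1 ≤ N 0 0 ∧ 0 ≤ N 0 1 ∧ 0 ≤ N 1 0 ∧ 1 ≤ N 1 1}
  one_mem' := by decide
  mul_mem' := by
    rintro M N ⟨hM₀₀, hM₀₁, hM₁₀, hM₁₁⟩ ⟨hN₀₀, hN₀₁, hN₁₀, hN₁₁⟩
    refine ⟨?_, ?_, ?_, ?_⟩ <;> simp only [Matrix.mul_apply, Fin.sum_univ_two] <;> nlinarith

def posMonoid : Submonoid G := Submonoid.closure {B * A, B * C}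

lemma rep_mem_posMat {V : G} (hV : V ∈ posMonoid) : rep V ∈ posMat := by
  refine (Submonoid.closure_le (S := posMat.comap rep)).2 ?_ hV
  rintro _ (rfl | rfl) <;>
    simp only [SetLike.mem_coe, Submonoid.mem_comap, map_mul, rep_A, rep_B, rep_C] <;>
    refine ⟨?_, ?_, ?_, ?_⟩ <;> decide

lemma hasBadSigns_rep_mul_B {V S : G} (hV : V ∈ posMonoid)
    (hS : S ∈ ({B * A, B * C} : Set G)) :
    HasBadSigns (rep (V * S * B)) := by
  obtain ⟨h₀₀, h₀₁, h₁₀, h₁₁⟩ := rep_mem_posMat hV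
  rw [map_mul, map_mul, Matrix.eta_fin_two (rep V)]
  rcases hS with rfl | rfl <;>
    simp only [HasBadSigns, map_mul, rep_A, rep_B, rep_C, Matrix.mul_fin_two, Matrix.of_apply,
      Matrix.cons_val', Matrix.cons_val_zero, Matrix.cons_val_one, Matrix.empty_val',
      Matrix.cons_val_fin_one] <;>
    refine ⟨by nlinarith, by nlinarith, by omega⟩

def IsBad (w : G) : Prop :=
  ∃ t : ℤ, ∃ V ∈ posMonoid, ∃ S ∈ ({B * A, B * C} : Set G),
    w = MulAut.conj (D ^ t) (V * S * B)

lemma isBad_conj_D_zpow (t : ℤ) {S : G} (hS : S ∈ ({B * A, B * C} : Set G)) :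
    IsBad (MulAut.conj (D ^ t) (S * B)) :=
  ⟨t, 1, one_mem _, S, hS, by rw [one_mul]⟩

lemma IsBad.map {φ : MulAut G} (hD : φ D = D) (hV : ∀ V ∈ posMonoid, φ V ∈ posMonoid)
    {S' : G} (hS' : S' ∈ ({B * A, B * C} : Set G)) (hB : φ B = S' * B) {w : G} (hw : IsBad w) :
    IsBad (φ w) := by
  obtain ⟨t, V, hV', S, hS, rfl⟩ := hw
  refine ⟨t, φ V * φ S, mul_mem (hV V hV') (hV S (Submonoid.subset_closure hS)), S', hS', ?_⟩
  rw [map_conj_zpow_D hD]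
  simp only [map_mul, hB, mul_assoc]

def IsR (φ : MulAut G) : Prop := φ A = A ∧ φ B = B * C * B⁻¹ ∧ φ C = B

def IsL (φ : MulAut G) : Prop := φ A = B ∧ φ B = B * A * B⁻¹ ∧ φ C = C

lemma IsR.map_B {φ : MulAut G} (h : IsR φ) : φ B = B * C * B := by rw [h.2.1, B_inv]

lemma IsL.map_B {φ : MulAut G} (h : IsL φ) : φ B = B * A * B := by rw [h.2.1, B_inv]

lemma IsR.map_D {φ : MulAut G} (h : IsR φ) : φ D = D := by
  simp only [D, map_mul, h.1, h.map_B, h.2.2, ← mul_assoc, B_mul_self, one_mul]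

lemma IsL.map_D {φ : MulAut G} (h : IsL φ) : φ D = D := by
  simp only [D, map_mul, h.1, h.map_B, h.2.2, ← mul_assoc]
  rw [mul_assoc _ B B, B_mul_self, mul_one]

lemma BA_mem_posMonoid : B * A ∈ posMonoid := Submonoid.subset_closure (Set.mem_insert _ _)

lemma BC_mem_posMonoid : B * C ∈ posMonoid :=
  Submonoid.subset_closure (Set.mem_insert_of_mem _ rfl)

lemma IsR.map_mem_posMonoid {φ : MulAut G} (h : IsR φ) {V : G} (hV : V ∈ posMonoid) :
    φ V ∈ posMonoid := by
  refine (Submonoid.closure_le (S := posMonoid.comap (φ : G →* G))).2 ?_ hV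
  rintro _ (rfl | rfl)
  · show φ (B * A) ∈ posMonoid
    rw [map_mul, h.map_B, h.1, mul_assoc]
    exact mul_mem BC_mem_posMonoid BA_mem_posMonoid
  · show φ (B * C) ∈ posMonoid
    rw [map_mul, h.map_B, h.2.2, mul_assoc _ B B, B_mul_self, mul_one]
    exact BC_mem_posMonoid

lemma IsL.map_mem_posMonoid {φ : MulAut G} (h : IsL φ) {V : G} (hV : V ∈ posMonoid) :
    φ V ∈ posMonoid := by
  refine (Submonoid.closure_le (S := posMonoid.comap (φ : G →* G))).2 ?_ hV
  rintro _ (rfl | rfl)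
  · show φ (B * A) ∈ posMonoid
    rw [map_mul, h.map_B, h.1, mul_assoc _ B B, B_mul_self, mul_one]
    exact BA_mem_posMonoid
  · show φ (B * C) ∈ posMonoid
    rw [map_mul, h.map_B, h.2.2, mul_assoc]
    exact mul_mem BA_mem_posMonoid BC_mem_posMonoid

lemma IsR.isBad {φ : MulAut G} (h : IsR φ) {w : G} (hw : IsBad w) : IsBad (φ w) :=
  hw.map h.map_D (fun _ => h.map_mem_posMonoid) (Set.mem_insert_of_mem _ rfl) h.map_B

lemma IsL.isBad {φ : MulAut G} (h : IsL φ) {w : G} (hw : IsBad w) : IsBad (φ w) :=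
  hw.map h.map_D (fun _ => h.map_mem_posMonoid) (Set.mem_insert _ _) h.map_B

def IsP (P : ℤ → G) : Prop :=
  ∀ m : ℤ, P (3 * m) = MulAut.conj (D ^ m) A ∧ P (3 * m + 1) = MulAut.conj (D ^ m) B ∧
    P (3 * m + 2) = MulAut.conj (D ^ m) C

lemma exists_eq_three_mul_add (k : ℤ) : ∃ m, k = 3 * m ∨ k = 3 * m + 1 ∨ k = 3 * m + 2 :=
  ⟨k / 3, by omega⟩

lemma IsP.exists_eq_conj {P : ℤ → G} (hP : IsP P) (k : ℤ) :
    ∃ m : ℤ, ∃ X ∈ ({A, B, C} : Set G), P k = MulAut.conj (D ^ m) X := by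
  obtain ⟨m, rfl | rfl | rfl⟩ := exists_eq_three_mul_add k
  exacts [⟨m, A, by simp, (hP m).1⟩, ⟨m, B, by simp, (hP m).2.1⟩, ⟨m, C, by simp, (hP m).2.2⟩]

lemma IsP.injective {P : ℤ → G} (hP : IsP P) : Function.Injective P := by
  intro j k h
  obtain ⟨m, rfl | rfl | rfl⟩ := exists_eq_three_mul_add j <;>
  obtain ⟨m', rfl | rfl | rfl⟩ := exists_eq_three_mul_add k <;>
  simp only [(hP m).1, (hP m).2.1, (hP m).2.2, (hP m').1, (hP m').2.1, (hP m').2.2] at h <;>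
  obtain ⟨rfl, hXY⟩ := conj_D_zpow_eq_conj (by simp) (by simp) h <;>
  first | rfl | exact absurd (congrArg rep hXY) (by simp only [rep_A, rep_B, rep_C]; decide)

lemma IsP.not_isBad {P : ℤ → G} (hP : IsP P) (k : ℤ) : ¬ IsBad (P k) := by
  rintro ⟨t, V, hV, S, hS, h⟩
  obtain ⟨m, X, hX, hk⟩ := hP.exists_eq_conj k
  rw [hk] at h
  have := hasBadSigns_rep_mul_B hV hS
  rw [eq_conj_of_conj_eq h.symm] at this
  exact not_hasBadSigns_rep_conj_D_zpow _ hX this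

def elemRel (R L : MulAut G) (f : ℤ → MulAut G) (u v : ℤ × ℤ) : Prop :=
  ∃ m n : ℤ,
    (f n = R ∧ ((u = (3 * m, n) ∧ v = (3 * m, n + 1)) ∨
      (u = (3 * m + 1, n) ∧ v = (3 * m + 2, n + 1)))) ∨
    (f n = L ∧ ((u = (3 * m + 1, n) ∧ v = (3 * m, n + 1)) ∨
      (u = (3 * m + 2, n) ∧ v = (3 * m + 2, n + 1))))

section Moves

variable {R L : MulAut G} {P : ℤ → G} {f : ℤ → MulAut G}

lemma elemRel.apply (hR : IsR R) (hL : IsL L) (hP : IsP P) {u v : ℤ × ℤ}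
    (h : elemRel R L f u v) : v.2 = u.2 + 1 ∧ f u.2 (P v.1) = P u.1 := by
  obtain ⟨m, n, ⟨hf, ⟨rfl, rfl⟩ | ⟨rfl, rfl⟩⟩ | ⟨hf, ⟨rfl, rfl⟩ | ⟨rfl, rfl⟩⟩⟩ := h <;>
    refine ⟨rfl, ?_⟩ <;>
    simp only [hf, (hP m).1, (hP m).2.1, (hP m).2.2, map_conj_zpow_D hR.map_D,
      map_conj_zpow_D hL.map_D, hR.1, hR.2.2, hL.1, hL.2.2]

lemma elemRel_or_isBad (hR : IsR R) (hL : IsL L) (hP : IsP P) {n : ℤ} (hf : f n = R ∨ f n = L)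
    (k : ℤ) : (∃ k', elemRel R L f (k', n) (k, n + 1)) ∨ IsBad (f n (P k)) := by
  obtain ⟨m, rfl | rfl | rfl⟩ := exists_eq_three_mul_add k <;> rcases hf with hf | hf
  · exact .inl ⟨3 * m, m, n, .inl ⟨hf, .inl ⟨rfl, rfl⟩⟩⟩
  · exact .inl ⟨3 * m + 1, m, n, .inr ⟨hf, .inl ⟨rfl, rfl⟩⟩⟩
  · rw [hf, (hP m).2.1, map_conj_zpow_D hR.map_D, hR.map_B]
    exact .inr (isBad_conj_D_zpow m (Set.mem_insert_of_mem _ rfl))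
  · rw [hf, (hP m).2.1, map_conj_zpow_D hL.map_D, hL.map_B]
    exact .inr (isBad_conj_D_zpow m (Set.mem_insert _ _))
  · exact .inl ⟨3 * m + 1, m, n, .inl ⟨hf, .inr ⟨rfl, rfl⟩⟩⟩
  · exact .inl ⟨3 * m + 2, m, n, .inr ⟨hf, .inr ⟨rfl, rfl⟩⟩⟩

variable {F : ℤ → MulAut G}

lemma apply_apply_eq (hF : ∀ n, F n = F (n - 1) * f n) (n : ℤ) (x : G) :
    F (n - 1) (f n x) = F n x := by
  rw [hF n, MulAut.mul_apply]

lemma apply_P_eq_of_eqvGen (hR : IsR R) (hL : IsL L) (hP : IsP P)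
    (hF : ∀ n, F n = F (n - 1) * f n) {u v : ℤ × ℤ} (h : EqvGen (elemRel R L f) u v) :
    F (u.2 - 1) (P u.1) = F (v.2 - 1) (P v.1) := by
  induction h with
  | rel u v h =>
    obtain ⟨hv, hfv⟩ := h.apply hR hL hP
    rw [hv, add_sub_cancel_right, ← hfv, apply_apply_eq hF]
  | refl => rfl
  | symm _ _ _ ih => exact ih.symm
  | trans _ _ _ _ _ ih₁ ih₂ => exact ih₁.trans ih₂

lemma eqvGen_or_isBad_of_le (hR : IsR R) (hL : IsL L) (hP : IsP P)
    (hf : ∀ n, f n = R ∨ f n = L) (hF : ∀ n, F n = F (n - 1) * f n) (b nb : ℤ)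
    {j : ℤ} (hj : j ≤ nb) :
    (∃ k, F (j - 1) (P k) = F (nb - 1) (P b) ∧ EqvGen (elemRel R L f) (k, j) (b, nb)) ∨
      ∃ x, IsBad x ∧ F (j - 1) x = F (nb - 1) (P b) := by
  induction j, hj using Int.leInductionDown with
  | base => exact .inl ⟨b, rfl, .refl _⟩
  | pred j _ ih =>
    rcases ih with ⟨k, hk, hkb⟩ | ⟨x, hx, hxb⟩
    · rcases elemRel_or_isBad hR hL hP (hf (j - 1)) k with ⟨k', hrel⟩ | hbad
      · rw [sub_add_cancel] at hrel
        exact .inl ⟨k', (apply_P_eq_of_eqvGen hR hL hP hF (.rel _ _ hrel)).trans hk,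
          .trans _ _ _ (.rel _ _ hrel) hkb⟩
      · exact .inr ⟨_, hbad, (apply_apply_eq hF _ _).trans hk⟩
    · refine .inr ⟨f (j - 1) x, ?_, (apply_apply_eq hF _ _).trans hxb⟩
      rcases hf (j - 1) with h | h <;> rw [h]
      exacts [hR.isBad hx, hL.isBad hx]

lemma eqvGen_of_apply_P_eq (hR : IsR R) (hL : IsL L) (hP : IsP P)
    (hf : ∀ n, f n = R ∨ f n = L) (hF : ∀ n, F n = F (n - 1) * f n)
    {a na b nb : ℤ} (hle : na ≤ nb)
    (h : F (na - 1) (P a) = F (nb - 1) (P b)) : EqvGen (elemRel R L f) (a, na) (b, nb) := by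
  rcases eqvGen_or_isBad_of_le hR hL hP hf hF b nb hle with ⟨k, hk, hkb⟩ | ⟨x, hx, hxb⟩
  · rwa [← hP.injective ((F (na - 1)).injective (hk.trans h.symm))]
  · rw [(F (na - 1)).injective (hxb.trans h.symm)] at hx
    exact absurd hx (hP.not_isBad a)

end Moves

theorem stmt12_general
    (R L : MulAut G)
    (hRA : R A = A) (hRB : R B = B * C * B⁻¹) (hRC : R C = B)
    (hLA : L A = B) (hLB : L B = B * A * B⁻¹) (hLC : L C = C)
    (P : ℤ → G)
    (hP0 : ∀ m : ℤ, P (3 * m) = D ^ m * A * (D ^ m)⁻¹)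
    (hP1 : ∀ m : ℤ, P (3 * m + 1) = D ^ m * B * (D ^ m)⁻¹)
    (hP2 : ∀ m : ℤ, P (3 * m + 2) = D ^ m * C * (D ^ m)⁻¹)
    (f : ℤ → MulAut G) (hfRL : ∀ n : ℤ, f n = R ∨ f n = L)
    (F : ℤ → MulAut G) (hF : ∀ n : ℤ, F n = F (n - 1) * f n)
    (Q : ℤ → ℤ → G) (hQ : ∀ m n : ℤ, Q m n = F (n - 1) (P m)) :
    ∀ x y : ℤ × ℤ, Q x.1 x.2 = Q y.1 y.2 ↔
      Relation.EqvGen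
        (fun u v : ℤ × ℤ => ∃ m n : ℤ,
          (f n = R ∧ ((u = (3 * m, n) ∧ v = (3 * m, n + 1)) ∨
            (u = (3 * m + 1, n) ∧ v = (3 * m + 2, n + 1)))) ∨
          (f n = L ∧ ((u = (3 * m + 1, n) ∧ v = (3 * m, n + 1)) ∨
            (u = (3 * m + 2, n) ∧ v = (3 * m + 2, n + 1)))))
        x y := by
  have hR : IsR R := ⟨hRA, hRB, hRC⟩
  have hL : IsL L := ⟨hLA, hLB, hLC⟩
  have hP : IsP P := fun m => ⟨hP0 m, hP1 m, hP2 m⟩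
  rintro ⟨a, na⟩ ⟨b, nb⟩
  change _ ↔ EqvGen (elemRel R L f) _ _
  rw [hQ, hQ]
  refine ⟨fun h => ?_, apply_P_eq_of_eqvGen hR hL hP hF⟩
  rcases le_total na nb with hle | hle
  · exact eqvGen_of_apply_P_eq hR hL hP hfRL hF hle h
  · exact (eqvGen_of_apply_P_eq hR hL hP hfRL hF hle h.symm).symm

/-- Q_{m,n} = Q_{m',n'} iff (m,n) and (m',n') are equivalent under the equivalence
relation generated by the elementary relations coming from f. -/
theorem stmt12
    (R L : MulAut G)
    (hRA : R A = A) (hRB : R B = B * C * B⁻¹) (hRC : R C = B)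
    (hLA : L A = B) (hLB : L B = B * A * B⁻¹) (hLC : L C = C)
    (P : ℤ → G)
    (hP0 : ∀ m : ℤ, P (3 * m) = D ^ m * A * (D ^ m)⁻¹)
    (hP1 : ∀ m : ℤ, P (3 * m + 1) = D ^ m * B * (D ^ m)⁻¹)
    (hP2 : ∀ m : ℤ, P (3 * m + 2) = D ^ m * C * (D ^ m)⁻¹)
    (p : ℤ) (hp : 2 ≤ p)
    (f : ℤ → MulAut G) (hfRL : ∀ n : ℤ, f n = R ∨ f n = L)
    (hfper : ∀ n : ℤ, f (n + p) = f n) (hf0 : f 0 = L) (hf1 : f 1 = R)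
    (F : ℤ → MulAut G) (hF0 : F 0 = 1) (hF : ∀ n : ℤ, F n = F (n - 1) * f n)
    (Q : ℤ → ℤ → G) (hQ : ∀ m n : ℤ, Q m n = F (n - 1) (P m)) :
    ∀ x y : ℤ × ℤ, Q x.1 x.2 = Q y.1 y.2 ↔
      Relation.EqvGen
        (fun u v : ℤ × ℤ => ∃ m n : ℤ,
          (f n = R ∧ ((u = (3 * m, n) ∧ v = (3 * m, n + 1)) ∨
            (u = (3 * m + 1, n) ∧ v = (3 * m + 2, n + 1)))) ∨
          (f n = L ∧ ((u = (3 * m + 1, n) ∧ v = (3 * m, n + 1)) ∨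
            (u = (3 * m + 2, n) ∧ v = (3 * m + 2, n + 1)))))
        x y :=
  stmt12_general R L hRA hRB hRC hLA hLB hLC P hP0 hP1 hP2 f hfRL F hF Q hQ
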